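/- The scheme X obtained by gluing two copies of affine 3-space A^3 along the loci {a ≠ 0} and {b ≠ 0} via the map (a, v2, v1) |-> (a^{-1}, a^{-1} v2, a^3 v1 + Σ λ_{jk} a^{2-k} v2^{j+k-1}) is separated; equivalently, the ring map K[a, v2, v1] ⊗_K K[b, w2, w1] -> K[b, b^{-1}, w2, w1] determined by a ⊗ 1 |-> b^{-1}, v2 ⊗ 1 |-> b^{-1} w2 (via the inverse glue), and b,w2,w1 mapping to themselves, with a⊗b |-> (glue of a)·b, is surjective. -/

import Mathlib

/-!
The image of the gluing map contains `b`, `w₂`, `w₁` (from the second factor) and `b⁻¹`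
(the image of `a`), and these already generate `K[b^{±1}, w₂, w₁]` as a `K`-algebra.
-/

noncomputable section

open MvPolynomial

/-- The coordinate ring `K[b^{±1}, w₂, w₁]` of the overlap `U₁ ∩ U₂`. -/
abbrev Rng (K : Type*) [Field K] := MvPolynomial (Fin 2) (LaurentPolynomial K)

variable (K : Type*) [Field K]

/-- Image of `b`. -/
def bImg : Rng K := MvPolynomial.C (LaurentPolynomial.T 1)

/-- Image of `a = b⁻¹`. -/
def aImg : Rng K := MvPolynomial.C (LaurentPolynomial.T (-1))

/-- The map `K[b, w₂, w₁] → K[b^{±1}, w₂, w₁]`, with `b, w₂, w₁` mapping to themselves. -/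
def phi2 : MvPolynomial (Fin 3) K →ₐ[K] Rng K :=
  aeval ![bImg K, X 0, X 1]

/-- The map `K[a, v₂, v₁] → K[b^{±1}, w₂, w₁]` determined by the glue:
`a ↦ b⁻¹`, `v₂ ↦ b⁻¹ w₂`, and (via the inverse glue)
`v₁ ↦ b³w₁ - Σ λ_{jk} b^{2-j} w₂^{j+k-1}`. -/
def phi1 (S : Finset (ℕ × ℕ)) (lam : ℕ × ℕ → K) : MvPolynomial (Fin 3) K →ₐ[K] Rng K :=
  aeval ![aImg K, aImg K * X 0,
    MvPolynomial.C (LaurentPolynomial.T 3) * X 1 -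
      ∑ p ∈ S, lam p •
        (MvPolynomial.C (LaurentPolynomial.T (2 - (p.1 : ℤ))) * X 0 ^ (p.1 + p.2 - 1))]

open scoped TensorProduct

namespace LaurentPolynomial

theorem T_eq_T_one_pow_mul_T_neg_one_pow {R : Type*} [Semiring R] (n : ℤ) :
    (T n : R[T;T⁻¹]) = T 1 ^ n.toNat * T (-1) ^ (-n).toNat := by
  rw [T_pow, T_pow, ← T_add]
  congr 1
  omega

theorem subalgebra_eq_top_of_T_one_mem_of_T_neg_one_mem {R : Type*} [CommSemiring R]
    (A : Subalgebra R R[T;T⁻¹]) (h₁ : T 1 ∈ A) (h₂ : T (-1) ∈ A) : A = ⊤ := by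
  refine Algebra.eq_top_iff.2 fun p => ?_
  induction p using LaurentPolynomial.induction_on' with
  | add p q hp hq => exact add_mem hp hq
  | C_mul_T n r =>
    rw [← smul_eq_C_mul, T_eq_T_one_pow_mul_T_neg_one_pow]
    exact A.smul_mem (mul_mem (pow_mem h₁ _) (pow_mem h₂ _)) r

end LaurentPolynomial

namespace MvPolynomial

theorem subalgebra_eq_top_of_C_mem_of_X_mem {R A σ : Type*} [CommSemiring R] [CommSemiring A]
    [Algebra R A] (S : Subalgebra R (MvPolynomial σ A)) (hC : ∀ a, C a ∈ S) (hX : ∀ i, X i ∈ S) :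
    S = ⊤ :=
  Algebra.eq_top_iff.2 fun p => by
    induction p using MvPolynomial.induction_on with
    | C a => exact hC a
    | add p q hp hq => exact add_mem hp hq
    | mul_X p i hp => exact mul_mem hp (hX i)

open LaurentPolynomial in
theorem subalgebra_eq_top_of_C_T_mem_of_X_mem {R σ : Type*} [CommSemiring R]
    (S : Subalgebra R (MvPolynomial σ R[T;T⁻¹])) (h₁ : C (T 1) ∈ S) (h₂ : C (T (-1)) ∈ S)
    (hX : ∀ i, X i ∈ S) : S = ⊤ := by
  refine subalgebra_eq_top_of_C_mem_of_X_mem S (fun a => ?_) hX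
  have hcomap := subalgebra_eq_top_of_T_one_mem_of_T_neg_one_mem
    (S.comap (IsScalarTower.toAlgHom R R[T;T⁻¹] _)) h₁ h₂
  exact Algebra.eq_top_iff.1 hcomap a

end MvPolynomial

theorem stmt6 (S : Finset (ℕ × ℕ)) (lam : ℕ × ℕ → K) :
    Function.Surjective
      (Algebra.TensorProduct.lift (phi1 K S lam) (phi2 K) (fun a b => mul_comm _ _) :
        MvPolynomial (Fin 3) K ⊗[K] MvPolynomial (Fin 3) K →ₐ[K] Rng K) := by
  rw [← AlgHom.range_eq_top]
  refine subalgebra_eq_top_of_C_T_mem_of_X_mem _ ⟨1 ⊗ₜ X 0, ?_⟩ ⟨X 0 ⊗ₜ 1, ?_⟩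
    fun i => ⟨1 ⊗ₜ X i.succ, ?_⟩
  · simp [phi2, bImg]
  · simp [phi1, aImg]
  · fin_cases i <;> simp [phi2]
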